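/- arXiv:2502.15837 — 2 statements merged into one kernel-verified Lean document; each statement's English description precedes it below -/
import Mathlib

section
/- If the layer partition {K_s(l)} is equitable with parameters c_{l,n}, and each node's state at time 0 depends only on its layer, then the exact solution of the full N-dimensional reduced-type system dx_i/dt = -B₁x_i + Σ_{j∼i} h(y_j), dy_i/dt = -B₂y_i + Σ_{j∼i} h(x_j) remains constant within each layer for all time, i.e., x_i(t) = X_l(t) for all i ∈ K_s(l), where (X_l, Y_l) solves the reduced system dX_l/dt = -B₁X_l + Σ_{n=-1}^{1} c_{l,n} h(Y_{l+n}), dY_l/dt = -B₂Y_l + Σ_{n=-1}^{1} c_{l,n} h(X_{l+n}). -/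
/-!
Lift the reduced solution to the graph, `(X t ∘ dist s, Y t ∘ dist s)`. By equitability a
neighbourhood sum of a function of the layer index collapses to
`c_{l,-1} f (l-1) + c_{l,0} f l + c_{l,1} f (l+1)`, so the lift solves the full system. The full
vector field is globally Lipschitz (a multiple of the identity plus the adjacency operator applied
to `h` coordinatewise), and the lift starts where `(x, y)` does, so uniqueness of solutions gives
equality for all time.
-/

open Finset

theorem Finset.sum_comp_eq_of_forall_eq_or_eq_or_eq {ι κ M : Type*} [DecidableEq κ]
    [AddCommMonoid M] {s : Finset ι} {d : ι → κ} {a b c : κ}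
    (hab : a ≠ b) (hac : a ≠ c) (hbc : b ≠ c) (hd : ∀ i ∈ s, d i = a ∨ d i = b ∨ d i = c)
    (f : κ → M) :
    ∑ i ∈ s, f (d i) =
      #{i ∈ s | d i = a} • f a + #{i ∈ s | d i = b} • f b + #{i ∈ s | d i = c} • f c := by
  rw [← sum_fiberwise_of_maps_to' (t := {a, b, c}) (by simpa using hd),
    sum_insert (by simp [hab, hac]), sum_pair hbc]
  simp only [sum_const, add_assoc]

theorem LipschitzWith.compLeft {ι α β : Type*} [Fintype ι] [PseudoEMetricSpace α]
    [PseudoEMetricSpace β] {K : NNReal} {f : α → β} (hf : LipschitzWith K f) :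
    LipschitzWith K (fun u : ι → α => f ∘ u) := fun u v =>
  edist_pi_le_iff.2 fun i => (hf _ _).trans (by gcongr; exact edist_le_pi_edist u v i)

namespace SimpleGraph

variable {V : Type*} [Fintype V] (G : SimpleGraph V) [DecidableRel G.Adj]

theorem sum_neighborFinset_comp_dist {M : Type*} [AddCommMonoid M] {s v : V}
    (hv : G.Reachable s v) (f : ℕ → M) :
    ∑ w ∈ G.neighborFinset v, f (G.dist s w) =
      #{w ∈ G.neighborFinset v | G.dist s w = G.dist s v - 1} • f (G.dist s v - 1)
      + #{w ∈ G.neighborFinset v | G.dist s w = G.dist s v} • f (G.dist s v)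
      + #{w ∈ G.neighborFinset v | G.dist s w = G.dist s v + 1} • f (G.dist s v + 1) := by
  -- at the root `l - 1 = l = 0` in `ℕ`, so the three layers are not distinct there
  obtain rfl | hne := eq_or_ne s v
  · have hN : ∀ w ∈ G.neighborFinset s, G.dist s w = G.dist s s + 1 := by simp
    have hN' (n : ℕ) (hn : n ≠ G.dist s s + 1) :
        #{w ∈ G.neighborFinset s | G.dist s w = n} = 0 :=
      card_eq_zero.2 (filter_false_of_mem fun w hw => hN w hw ▸ hn.symm)
    rw [sum_congr rfl fun w hw => by rw [hN w hw], filter_true_of_mem hN, hN' _ (by simp),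
      hN' _ (by simp)]
    simp
  · have hpos := hv.pos_dist_of_ne hne
    exact sum_comp_eq_of_forall_eq_or_eq_or_eq (by omega) (by omega) (by omega)
      (fun w hw => by have := ((G.mem_neighborFinset v w).1 hw).diff_dist_adj (u := s); omega) f

def crossCoupledField (h : ℝ → ℝ) (B₁ B₂ : ℝ) (p : (V → ℝ) × (V → ℝ)) : (V → ℝ) × (V → ℝ) :=
  (fun v => -B₁ * p.1 v + ∑ w ∈ G.neighborFinset v, h (p.2 w),
   fun v => -B₂ * p.2 v + ∑ w ∈ G.neighborFinset v, h (p.1 w))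

theorem exists_lipschitzWith_crossCoupledField {h : ℝ → ℝ} {Kh : NNReal} (hh : LipschitzWith Kh h)
    (B₁ B₂ : ℝ) : ∃ K, LipschitzWith K (G.crossCoupledField h B₁ B₂) := by
  classical
  let A : (V → ℝ) →L[ℝ] V → ℝ := LinearMap.toContinuousLinearMap (G.adjMatrix ℝ).mulVecLin
  have hA : ∀ u v, A u v = ∑ w ∈ G.neighborFinset v, u w := fun u v => adjMatrix_mulVec_apply ..
  have drive (B : ℝ) : LipschitzWith (‖-B‖₊ + ‖A‖₊ * Kh) fun p : (V → ℝ) × (V → ℝ) =>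
      -B • p.1 + A (h ∘ p.2) := by
    simpa using ((lipschitzWith_smul (-B)).comp LipschitzWith.prod_fst).add
      ((A.lipschitz.comp hh.compLeft).comp LipschitzWith.prod_snd)
  have hF : G.crossCoupledField h B₁ B₂ =
      fun p => (-B₁ • p.1 + A (h ∘ p.2), -B₂ • p.2 + A (h ∘ p.1)) := by
    ext p v <;> simp [crossCoupledField, hA]
  exact ⟨_, hF ▸ (drive B₁).prodMk
    ((drive B₂).comp (LipschitzWith.prod_snd.prodMk LipschitzWith.prod_fst))⟩

end SimpleGraph

theorem stmt13_general {V : Type*} [Fintype V] (G : SimpleGraph V)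
    [DecidableRel G.Adj] (hconn : G.Connected) (s : V)
    (h : ℝ → ℝ) (Kh : NNReal) (hLip : LipschitzWith Kh h)
    (B₁ B₂ : ℝ)
    (cm c0 cp : ℕ → ℕ)
    -- equitable partition: exact neighbor counts into layers l-1, l, l+1
    (hcm : ∀ v : V, ((G.neighborFinset v).filter
      (fun w => G.dist s w = G.dist s v - 1)).card = cm (G.dist s v))
    (hc0 : ∀ v : V, ((G.neighborFinset v).filter
      (fun w => G.dist s w = G.dist s v)).card = c0 (G.dist s v))
    (hcp : ∀ v : V, ((G.neighborFinset v).filter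
      (fun w => G.dist s w = G.dist s v + 1)).card = cp (G.dist s v))
    -- full system
    (x y : ℝ → V → ℝ)
    (hx : ∀ v t, HasDerivAt (fun τ => x τ v)
      (-B₁ * x t v + ∑ w ∈ G.neighborFinset v, h (y t w)) t)
    (hy : ∀ v t, HasDerivAt (fun τ => y τ v)
      (-B₂ * y t v + ∑ w ∈ G.neighborFinset v, h (x t w)) t)
    -- reduced system
    (X Y : ℝ → ℕ → ℝ)
    (hX : ∀ l t, HasDerivAt (fun τ => X τ l)
      (-B₁ * X t l + (cm l : ℝ) * h (Y t (l - 1)) + (c0 l : ℝ) * h (Y t l)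
        + (cp l : ℝ) * h (Y t (l + 1))) t)
    (hY : ∀ l t, HasDerivAt (fun τ => Y τ l)
      (-B₂ * Y t l + (cm l : ℝ) * h (X t (l - 1)) + (c0 l : ℝ) * h (X t l)
        + (cp l : ℝ) * h (X t (l + 1))) t)
    -- layer-constant initial data
    (hx0 : ∀ v : V, x 0 v = X 0 (G.dist s v))
    (hy0 : ∀ v : V, y 0 v = Y 0 (G.dist s v)) :
    ∀ t : ℝ, ∀ v : V, x t v = X t (G.dist s v) ∧ y t v = Y t (G.dist s v) := by
  have hlayer (f : ℕ → ℝ) (v : V) : ∑ w ∈ G.neighborFinset v, f (G.dist s w) =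
      cm (G.dist s v) * f (G.dist s v - 1) + c0 (G.dist s v) * f (G.dist s v)
        + cp (G.dist s v) * f (G.dist s v + 1) := by
    simp only [G.sum_neighborFinset_comp_dist (hconn s v), hcm, hc0, hcp, nsmul_eq_mul]
  have hfull (t : ℝ) :
      HasDerivAt (fun τ => (x τ, y τ)) (G.crossCoupledField h B₁ B₂ (x t, y t)) t :=
    (hasDerivAt_pi.2 fun v => hx v t).prodMk (hasDerivAt_pi.2 fun v => hy v t)
  have hlayered (t : ℝ) :
      HasDerivAt (fun τ => (fun v => X τ (G.dist s v), fun v => Y τ (G.dist s v)))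
      (G.crossCoupledField h B₁ B₂ (fun v => X t (G.dist s v), fun v => Y t (G.dist s v))) t := by
    refine (hasDerivAt_pi.2 fun v => ?_).prodMk (hasDerivAt_pi.2 fun v => ?_)
    · refine (hX (G.dist s v) t).congr_deriv ?_
      rw [hlayer (fun n => h (Y t n))]
      ring
    · refine (hY (G.dist s v) t).congr_deriv ?_
      rw [hlayer (fun n => h (X t n))]
      ring
  obtain ⟨K, hK⟩ := G.exists_lipschitzWith_crossCoupledField hLip B₁ B₂
  have hsame := ODE_solution_unique_univ (v := fun _ => G.crossCoupledField h B₁ B₂)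
    (s := fun _ => Set.univ) (t₀ := 0) (fun _ => hK.lipschitzOnWith)
    (fun t => ⟨hfull t, trivial⟩) (fun t => ⟨hlayered t, trivial⟩)
    (Prod.ext (funext hx0) (funext hy0))
  intro t v
  simp only [funext_iff, Prod.mk.injEq] at hsame
  exact ⟨(hsame t).1 v, (hsame t).2 v⟩

/-- If the layer partition is equitable with parameters `c_{l,n}` and the initial state
depends only on the layer, then the exact solution of the full system remains constant
within each layer for all time: `xᵢ(t) = X_l(t)` for `i ∈ K_s(l)`, where `(X_l, Y_l)`
solves the reduced system
`dX_l/dt = -B₁X_l + Σₙ c_{l,n} h(Y_{l+n})`, `dY_l/dt = -B₂Y_l + Σₙ c_{l,n} h(X_{l+n})`. -/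
theorem stmt13 {V : Type*} [Fintype V] [DecidableEq V] (G : SimpleGraph V)
    [DecidableRel G.Adj] (hconn : G.Connected) (s : V)
    (h : ℝ → ℝ) (Kh : NNReal) (hLip : LipschitzWith Kh h)
    (B₁ B₂ : ℝ)
    (cm c0 cp : ℕ → ℕ)
    -- equitable partition: exact neighbor counts into layers l-1, l, l+1
    (hcm : ∀ v : V, ((G.neighborFinset v).filter
      (fun w => G.dist s w = G.dist s v - 1)).card = cm (G.dist s v))
    (hc0 : ∀ v : V, ((G.neighborFinset v).filter
      (fun w => G.dist s w = G.dist s v)).card = c0 (G.dist s v))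
    (hcp : ∀ v : V, ((G.neighborFinset v).filter
      (fun w => G.dist s w = G.dist s v + 1)).card = cp (G.dist s v))
    (hdeg : ∀ v : V, cm (G.dist s v) + c0 (G.dist s v) + cp (G.dist s v) = G.degree v)
    -- full system
    (x y : ℝ → V → ℝ)
    (hx : ∀ v t, HasDerivAt (fun τ => x τ v)
      (-B₁ * x t v + ∑ w ∈ G.neighborFinset v, h (y t w)) t)
    (hy : ∀ v t, HasDerivAt (fun τ => y τ v)
      (-B₂ * y t v + ∑ w ∈ G.neighborFinset v, h (x t w)) t)
    -- reduced system
    (X Y : ℝ → ℕ → ℝ)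
    (hX : ∀ l t, HasDerivAt (fun τ => X τ l)
      (-B₁ * X t l + (cm l : ℝ) * h (Y t (l - 1)) + (c0 l : ℝ) * h (Y t l)
        + (cp l : ℝ) * h (Y t (l + 1))) t)
    (hY : ∀ l t, HasDerivAt (fun τ => Y τ l)
      (-B₂ * Y t l + (cm l : ℝ) * h (X t (l - 1)) + (c0 l : ℝ) * h (X t l)
        + (cp l : ℝ) * h (X t (l + 1))) t)
    -- layer-constant initial data
    (hx0 : ∀ v : V, x 0 v = X 0 (G.dist s v))
    (hy0 : ∀ v : V, y 0 v = Y 0 (G.dist s v)) :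
    ∀ t : ℝ, ∀ v : V, x t v = X t (G.dist s v) ∧ y t v = Y t (G.dist s v) :=
  stmt13_general G hconn s h Kh hLip B₁ B₂ cm c0 cp hcm hc0 hcp x y hx hy X Y hX hY hx0 hy0
end

section
/- For the scalar reduced reciprocity fixed-point problem a·u = b·v²/(1+c·v²)·k and d·v = e·u²/(1+f·u²)·k with all parameters positive: (0,0) is always a solution, and a positive solution (u,v) with u,v > 0 exists if and only if sup_{u>0} Φ(u)/u ≥ 1, where Φ(u) = (bk/a)·h_c((ek/d)·h_f(u)) with h_c(v) = v²/(1+c v²) and h_f(u) = u²/(1+f u²). -/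
lemma ratio_le_lin (c t : ℝ) (hc : 0 < c) (ht : 0 ≤ t) :
    t ^ 2 / (1 + c * t ^ 2) ≤ max 1 (1/c) * t := by
  have h1 : 0 < 1 + c * t ^ 2 := by positivity
  rw [div_le_iff₀ h1]
  have hm1 : (1:ℝ) ≤ max 1 (1/c) := le_max_left _ _
  have hm2 : 1 ≤ c * max 1 (1/c) := by
    rw [mul_max_of_nonneg _ _ hc.le]
    have : c * (1/c) = 1 := by field_simp
    rw [this]
    exact le_max_right _ _
  nlinarith [mul_nonneg ht (sq_nonneg (t - 1)),
    mul_nonneg (sub_nonneg.2 hm1) ht,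
    mul_nonneg (sub_nonneg.2 hm2) (by positivity : (0:ℝ) ≤ t^3)]

lemma ratio_le_inv (c t : ℝ) (hc : 0 < c) :
    t ^ 2 / (1 + c * t ^ 2) ≤ 1 / c := by
  have h1 : 0 < 1 + c * t ^ 2 := by positivity
  rw [div_le_div_iff₀ h1 hc]
  nlinarith

lemma ratio_le_sq (c t : ℝ) (hc : 0 < c) :
    t ^ 2 / (1 + c * t ^ 2) ≤ t ^ 2 := by
  have h1 : 0 < 1 + c * t ^ 2 := by positivity
  rw [div_le_iff₀ h1]
  nlinarith [sq_nonneg t, sq_nonneg (t*t)]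

/-- Scalar reduced reciprocity fixed-point problem
`a·u = k·b·v²/(1+cv²)`, `d·v = k·e·u²/(1+fu²)` with all parameters positive:
`(0,0)` is always a solution, and a positive solution exists if and only if
`sup_{u>0} Φ(u)/u ≥ 1`, where `Φ(u) = (bk/a)·h_c((ek/d)·h_f(u))` with
`h_c(v) = v²/(1+cv²)`, `h_f(u) = u²/(1+fu²)`. -/
theorem stmt19 (a b c d e f k : ℝ)
    (ha : 0 < a) (hb : 0 < b) (hc : 0 < c) (hd : 0 < d) (he : 0 < e) (hf : 0 < f)
    (hk : 0 < k)
    (Φ : ℝ → ℝ)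
    (hΦ : ∀ u, Φ u = (b * k / a) *
      (((e * k / d) * (u ^ 2 / (1 + f * u ^ 2))) ^ 2 /
        (1 + c * ((e * k / d) * (u ^ 2 / (1 + f * u ^ 2))) ^ 2))) :
    (a * 0 = b * (0 : ℝ) ^ 2 / (1 + c * 0 ^ 2) * k ∧
      d * 0 = e * (0 : ℝ) ^ 2 / (1 + f * 0 ^ 2) * k) ∧
    ((∃ u v : ℝ, 0 < u ∧ 0 < v ∧
        a * u = b * v ^ 2 / (1 + c * v ^ 2) * k ∧
        d * v = e * u ^ 2 / (1 + f * u ^ 2) * k) ↔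
      1 ≤ sSup {r : ℝ | ∃ u : ℝ, 0 < u ∧ r = Φ u / u}) := by

  have hΦnn : ∀ u : ℝ, 0 ≤ Φ u := by
    intro u; rw [hΦ]; positivity
  -- uniform linear bound on Φ
  set C : ℝ := (b*k/a) * (max 1 (1/c) * ((e*k/d) * (max 1 (1/f)))) with hCdef
  have hΦle : ∀ u : ℝ, 0 ≤ u → Φ u ≤ C * u := by
    intro u hu
    rw [hΦ]
    have hA0 : 0 ≤ u^2/(1+f*u^2) := by positivity
    have hAle : u^2/(1+f*u^2) ≤ max 1 (1/f) * u := ratio_le_lin f u hf hu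
    set X := (e*k/d) * (u^2/(1+f*u^2)) with hXdef
    have hX0 : 0 ≤ X := by positivity
    have h1 : X^2/(1+c*X^2) ≤ max 1 (1/c) * X := ratio_le_lin c X hc hX0
    have hXle : X ≤ (e*k/d) * (max 1 (1/f) * u) := by
      rw [hXdef]
      exact mul_le_mul_of_nonneg_left hAle (by positivity)
    have hmc0 : (0:ℝ) ≤ max 1 (1/c) := le_trans zero_le_one (le_max_left _ _)
    calc (b*k/a) * (X^2/(1+c*X^2))
        ≤ (b*k/a) * (max 1 (1/c) * X) :=
          mul_le_mul_of_nonneg_left h1 (by positivity)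
      _ ≤ (b*k/a) * (max 1 (1/c) * ((e*k/d) * (max 1 (1/f) * u))) := by
          apply mul_le_mul_of_nonneg_left _ (by positivity)
          exact mul_le_mul_of_nonneg_left hXle hmc0
      _ = C * u := by rw [hCdef]; ring
  set S := {r : ℝ | ∃ u : ℝ, 0 < u ∧ r = Φ u / u} with hSdef
  have hSne : S.Nonempty := ⟨Φ 1 / 1, 1, one_pos, rfl⟩
  have hBdd : BddAbove S := by
    refine ⟨C, ?_⟩
    rintro r ⟨u, hu, rfl⟩
    rw [div_le_iff₀ hu]
    exact hΦle u hu.le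
  -- continuity of Φ
  have hcontΦ : Continuous Φ := by
    have hΦeq : Φ = fun u => (b * k / a) *
      (((e * k / d) * (u ^ 2 / (1 + f * u ^ 2))) ^ 2 /
        (1 + c * ((e * k / d) * (u ^ 2 / (1 + f * u ^ 2))) ^ 2)) := funext hΦ
    rw [hΦeq]
    have hA : Continuous (fun u : ℝ => u ^ 2 / (1 + f * u ^ 2)) :=
      Continuous.div (continuous_pow 2)
        (continuous_const.add (continuous_const.mul (continuous_pow 2)))
        (fun x => by positivity)
    have hX : Continuous (fun u : ℝ => (e * k / d) * (u ^ 2 / (1 + f * u ^ 2))) :=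
      continuous_const.mul hA
    exact continuous_const.mul (Continuous.div (hX.pow 2)
      (continuous_const.add (continuous_const.mul (hX.pow 2)))
      (fun x => by positivity))
  refine ⟨⟨by norm_num, by norm_num⟩, ?_, ?_⟩
  · -- forward
    rintro ⟨u, v, hu, hv, h1, h2⟩
    have hfu : (0:ℝ) < 1 + f*u^2 := by positivity
    have hcv : (0:ℝ) < 1 + c*v^2 := by positivity
    have hv' : v = (e*k/d) * (u^2/(1+f*u^2)) := by
      field_simp
      field_simp at h2
      linarith
    have hfix : Φ u = u := by
      rw [hΦ u, ← hv']
      field_simp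
      field_simp at h1
      linarith
    have h1S : (1:ℝ) ∈ S := ⟨u, hu, by rw [hfix]; field_simp⟩
    exact le_csSup hBdd h1S
  · -- reverse
    intro hsup
    set K₀ : ℝ := (b*k/a) * (e*k/d)^2 with hK₀def
    have hK₀ : 0 < K₀ := by positivity
    set B : ℝ := (b*k/a) * (1/c) with hBdef
    have hB : 0 < B := by positivity
    set δ : ℝ := min 1 (1/(2*K₀)) with hδdef
    have hδ : 0 < δ := by positivity
    have hδ1 : δ ≤ 1 := min_le_left _ _
    have hδ2 : δ ≤ 1/(2*K₀) := min_le_right _ _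
    set R : ℝ := max δ (2*B) with hRdef
    have hδR : δ ≤ R := le_max_left _ _
    have hRB : 2*B ≤ R := le_max_right _ _
    -- small u claim
    have hsmall : ∀ u : ℝ, 0 < u → u ≤ δ → Φ u / u ≤ 1/2 := by
      intro u hu huδ
      rw [div_le_iff₀ hu]
      have hΦ4 : Φ u ≤ K₀ * u^4 := by
        rw [hΦ]
        have hA0 : 0 ≤ u^2/(1+f*u^2) := by positivity
        have hAle : u^2/(1+f*u^2) ≤ u^2 := ratio_le_sq f u hf
        set X := (e*k/d) * (u^2/(1+f*u^2)) with hXdef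
        have hX0 : 0 ≤ X := by positivity
        have hXsq : X^2/(1+c*X^2) ≤ X^2 := ratio_le_sq c X hc
        have hXle : X ≤ (e*k/d) * u^2 := by
          rw [hXdef]; exact mul_le_mul_of_nonneg_left hAle (by positivity)
        have hX2 : X^2 ≤ ((e*k/d) * u^2)^2 := by
          apply pow_le_pow_left₀ hX0 hXle
        calc (b*k/a) * (X^2/(1+c*X^2)) ≤ (b*k/a) * X^2 :=
              mul_le_mul_of_nonneg_left hXsq (by positivity)
          _ ≤ (b*k/a) * ((e*k/d) * u^2)^2 :=
              mul_le_mul_of_nonneg_left hX2 (by positivity)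
          _ = K₀ * u^4 := by rw [hK₀def]; ring
      have hu3 : u^3 ≤ 1/(2*K₀) := by
        have hu1 : u ≤ 1 := le_trans huδ hδ1
        calc u^3 ≤ u := by nlinarith [mul_nonneg (mul_nonneg hu.le (sub_nonneg.2 hu1)) (by linarith : (0:ℝ) ≤ 1 + u)]
          _ ≤ δ := huδ
          _ ≤ 1/(2*K₀) := hδ2
      have : K₀ * u^4 ≤ 1/2 * u := by
        have := mul_le_mul_of_nonneg_left hu3 hK₀.le
        have h2K : K₀ * (1/(2*K₀)) = 1/2 := by field_simp
        nlinarith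
      linarith
    -- large u claim
    have hlarge : ∀ u : ℝ, R ≤ u → Φ u / u ≤ 1/2 := by
      intro u huR
      have hu : 0 < u := lt_of_lt_of_le (lt_of_lt_of_le hδ hδR) huR
      rw [div_le_iff₀ hu]
      have hΦB : Φ u ≤ B := by
        rw [hΦ, hBdef]
        exact mul_le_mul_of_nonneg_left (ratio_le_inv c _ hc) (by positivity)
      have : 2*B ≤ u := le_trans hRB huR
      linarith
    -- maximum on [δ, R]
    have hg : ContinuousOn (fun u => Φ u / u) (Set.Icc δ R) := by
      apply ContinuousOn.div hcontΦ.continuousOn continuousOn_id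
      intro x hx
      exact ne_of_gt (lt_of_lt_of_le hδ hx.1)
    obtain ⟨u₁, hu₁mem, hmax⟩ :=
      isCompact_Icc.exists_isMaxOn (Set.nonempty_Icc.2 hδR) hg
    have hub : sSup S ≤ max (1/2) (Φ u₁ / u₁) := by
      apply csSup_le hSne
      rintro r ⟨u, hu, rfl⟩
      rcases le_or_gt u δ with h | h
      · exact le_trans (hsmall u hu h) (le_max_left _ _)
      · rcases le_or_gt R u with h' | h'
        · exact le_trans (hlarge u h') (le_max_left _ _)
        · exact le_trans (hmax ⟨h.le, h'.le⟩) (le_max_right _ _)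
    have h1le : 1 ≤ Φ u₁ / u₁ := by
      rcases le_max_iff.1 (le_trans hsup hub) with h | h
      · norm_num at h
      · exact h
    have hu₁pos : 0 < u₁ := lt_of_lt_of_le hδ hu₁mem.1
    have hΦu₁ : u₁ ≤ Φ u₁ := by
      have := (le_div_iff₀ hu₁pos).1 h1le
      linarith
    have hΦδ : Φ δ ≤ δ/2 := by
      have := hsmall δ hδ le_rfl
      rw [div_le_iff₀ hδ] at this
      linarith
    obtain ⟨u₀, hu₀mem, hu₀⟩ := intermediate_value_Icc hu₁mem.1
      ((hcontΦ.sub continuous_id).continuousOn (s := Set.Icc δ u₁))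
      (show (0:ℝ) ∈ Set.Icc (Φ δ - δ) (Φ u₁ - u₁) from ⟨by linarith, by linarith⟩)
    have hu₀pos : 0 < u₀ := lt_of_lt_of_le hδ hu₀mem.1
    have hfix : Φ u₀ = u₀ := by
      have : Φ u₀ - u₀ = 0 := hu₀
      linarith
    have hfu₀ : (0:ℝ) < 1 + f*u₀^2 := by positivity
    refine ⟨u₀, (e*k/d) * (u₀^2/(1+f*u₀^2)), hu₀pos, by positivity, ?_, ?_⟩
    · have hne2 : (1 + c * ((e*k/d) * (u₀^2/(1+f*u₀^2)))^2) ≠ 0 := by positivity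
      calc a * u₀ = a * Φ u₀ := by rw [hfix]
        _ = b * ((e*k/d) * (u₀^2/(1+f*u₀^2)))^2 /
              (1 + c * ((e*k/d) * (u₀^2/(1+f*u₀^2)))^2) * k := by
            rw [hΦ]
            field_simp
    · field_simp
end
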